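/- arXiv:2412.03825 — 5 statements merged into one kernel-verified Lean document; each statement's English description precedes it below -/
import Mathlib

section
/- Let Δ̃ be a real symmetric n×n matrix and let 0 < λ ≤ 1 be such that every eigenvalue μ of Δ̃ satisfies either μ = 0 or λ ≤ μ ≤ 2 − λ. Set P = I − Δ̃. Then for every f ∈ ℝⁿ, (Pf)ᵀ Δ̃ (Pf) ≤ (1−λ)² · fᵀ Δ̃ f. -/
open Matrix

/-- Dirichlet energy decay for one smoothing step: if every eigenvalue `μ` of the symmetric
matrix `Δ̃` satisfies `μ = 0` or `λ ≤ μ ≤ 2 − λ` (with `0 < λ ≤ 1`), and `P = I − Δ̃`, then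
`(Pf)ᵀ Δ̃ (Pf) ≤ (1−λ)² · fᵀ Δ̃ f` for all `f`. -/
theorem dirichlet_energy_decay_smoothing {n : ℕ}
    (Δ : Matrix (Fin n) (Fin n) ℝ) (hΔ : Δ.IsSymm)
    (lam : ℝ) (hlam0 : 0 < lam) (hlam1 : lam ≤ 1)
    (heig : ∀ μ : ℝ, (∃ v : Fin n → ℝ, v ≠ 0 ∧ Δ.mulVec v = μ • v) →
      μ = 0 ∨ (lam ≤ μ ∧ μ ≤ 2 - lam))
    (P : Matrix (Fin n) (Fin n) ℝ) (hP : P = 1 - Δ)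
    (f : Fin n → ℝ) :
    (P.mulVec f) ⬝ᵥ (Δ.mulVec (P.mulVec f)) ≤ (1 - lam) ^ 2 * (f ⬝ᵥ Δ.mulVec f) := by
  have hH : Δ.IsHermitian := by
    rw [Matrix.IsHermitian, Matrix.conjTranspose_eq_transpose_of_trivial]
    exact hΔ
  set U : Matrix (Fin n) (Fin n) ℝ := (hH.eigenvectorUnitary : Matrix (Fin n) (Fin n) ℝ) with hU
  set μ : Fin n → ℝ := hH.eigenvalues with hμ
  have hUU : star U * U = 1 := Unitary.coe_star_mul_self hH.eigenvectorUnitary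
  have hspec : Δ = U * Matrix.diagonal μ * star U := by
    simpa using hH.spectral_theorem
  have hbound : ∀ i, μ i = 0 ∨ (lam ≤ μ i ∧ μ i ≤ 2 - lam) := fun i =>
    heig (μ i) ⟨hH.eigenvectorBasis i, by simpa using hH.eigenvectorBasis.orthonormal.ne_zero i,
      hH.mulVec_eigenvectorBasis i⟩
  have hsU : star U = Uᵀ := by
    rw [← Matrix.conjTranspose_eq_transpose_of_trivial]; rfl
  -- star U * Δ = diagonal μ * star U
  have hcomm : star U * Δ = Matrix.diagonal μ * star U := by
    rw [hspec, ← Matrix.mul_assoc, ← Matrix.mul_assoc, hUU, Matrix.one_mul]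
  have hΔv : ∀ x : Fin n → ℝ, (star U).mulVec (Δ.mulVec x)
      = (Matrix.diagonal μ).mulVec ((star U).mulVec x) := by
    intro x
    rw [mulVec_mulVec, hcomm, ← mulVec_mulVec]
  -- quadratic form formula
  have hquad : ∀ x : Fin n → ℝ, x ⬝ᵥ Δ.mulVec x = ∑ i, μ i * ((star U).mulVec x i) ^ 2 := by
    intro x
    have h1 : x ⬝ᵥ Δ.mulVec x
        = ((star U).mulVec x) ⬝ᵥ (Matrix.diagonal μ).mulVec ((star U).mulVec x) := by
      conv_lhs => rw [hspec]
      rw [Matrix.mul_assoc, ← mulVec_mulVec, dotProduct_mulVec, mulVec_mulVec, ← hcomm,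
        ← mulVec_mulVec]
      congr 1
      rw [hsU, ← vecMul_transpose, transpose_transpose]
    rw [h1]
    simp only [dotProduct, Matrix.mulVec_diagonal]
    exact Finset.sum_congr rfl fun i _ => by ring
  -- coordinates of P f
  have hPf : (star U).mulVec (P.mulVec f) = fun i => (1 - μ i) * (star U).mulVec f i := by
    rw [hP, Matrix.sub_mulVec, Matrix.one_mulVec, Matrix.mulVec_sub, hΔv]
    funext i
    simp [← Matrix.mulVec_mulVec, Matrix.mulVec_diagonal, one_sub_mul]
  rw [hquad, hquad, Finset.mul_sum, hPf]
  apply Finset.sum_le_sum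
  intro i _
  rcases hbound i with h0 | ⟨h1, h2⟩
  · simp [h0]
  · set c := (star U).mulVec f i
    have habs : |1 - μ i| ≤ 1 - lam := by
      rw [abs_le]; constructor <;> linarith
    have hμpos : 0 ≤ μ i := by linarith
    calc μ i * ((1 - μ i) * c) ^ 2 = μ i * ((1 - μ i) ^ 2 * c ^ 2) := by ring
      _ ≤ μ i * ((1 - lam) ^ 2 * c ^ 2) := by
          apply mul_le_mul_of_nonneg_left _ hμpos
          apply mul_le_mul_of_nonneg_right _ (sq_nonneg c)
          calc (1 - μ i) ^ 2 = |1 - μ i| ^ 2 := (sq_abs _).symm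
            _ ≤ (1 - lam) ^ 2 := pow_le_pow_left₀ (abs_nonneg _) habs 2
      _ = (1 - lam) ^ 2 * (μ i * c ^ 2) := by ring
end

section
/- Let Δ̃ be a real symmetric n×n matrix and let 0 < λ ≤ 1 be such that every eigenvalue μ of Δ̃ satisfies either μ = 0 or λ ≤ μ ≤ 2 − λ. Set P = I − Δ̃. Then for every M ∈ ℝ^{n×c} and every Y ∈ ℝ^{c×c}, tr((PMY)ᵀ Δ̃ (PMY)) ≤ (1−λ)² · ‖Y‖₂² · tr(Mᵀ Δ̃ M), where ‖Y‖₂ denotes the operator 2-norm (largest singular value) of Y. -/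
open Matrix

/-- Euclidean norm ‖·‖₂ on ℝⁿ. -/
noncomputable def euclNorm {n : ℕ} (v : Fin n → ℝ) : ℝ :=
  Real.sqrt (∑ i, v i ^ 2)

/-- Operator 2-norm (largest singular value) of a square real matrix. -/
noncomputable def opNorm2 {c : ℕ} (Y : Matrix (Fin c) (Fin c) ℝ) : ℝ :=
  sSup {r : ℝ | ∃ u : Fin c → ℝ, euclNorm u = 1 ∧ euclNorm (Y.mulVec u) = r}

namespace DirichletAux

lemma euclNorm_nonneg {n : ℕ} (v : Fin n → ℝ) : 0 ≤ euclNorm v := Real.sqrt_nonneg _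

lemma euclNorm_sq {n : ℕ} (v : Fin n → ℝ) : euclNorm v ^ 2 = ∑ i, v i ^ 2 :=
  Real.sq_sqrt (Finset.sum_nonneg fun _ _ => sq_nonneg _)

lemma euclNorm_zero {n : ℕ} : euclNorm (0 : Fin n → ℝ) = 0 := by simp [euclNorm]

lemma euclNorm_pos {n : ℕ} {v : Fin n → ℝ} (hv : v ≠ 0) : 0 < euclNorm v := by
  rcases (euclNorm_nonneg v).lt_or_eq with h | h
  · exact h
  · exfalso
    apply hv
    have h2 : ∑ i, v i ^ 2 = 0 := by
      have := euclNorm_sq v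
      rw [← h] at this
      simpa using this.symm
    funext i
    have := (Finset.sum_eq_zero_iff_of_nonneg (fun j _ => sq_nonneg (v j))).mp h2 i
      (Finset.mem_univ i)
    exact pow_eq_zero_iff (n := 2) (by norm_num) |>.mp this

lemma euclNorm_smul {n : ℕ} (a : ℝ) (v : Fin n → ℝ) :
    euclNorm (a • v) = |a| * euclNorm v := by
  unfold euclNorm
  rw [← Real.sqrt_sq_eq_abs, ← Real.sqrt_mul (sq_nonneg a), Finset.mul_sum]
  congr 1
  refine Finset.sum_congr rfl fun i _ => ?_
  simp [mul_pow]

lemma dotProduct_le {n : ℕ} (v w : Fin n → ℝ) : v ⬝ᵥ w ≤ euclNorm v * euclNorm w := by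
  have h := Finset.sum_mul_sq_le_sq_mul_sq Finset.univ v w
  have h2 : v ⬝ᵥ w ≤ Real.sqrt ((∑ i, v i ^ 2) * (∑ i, w i ^ 2)) := by
    calc v ⬝ᵥ w ≤ |∑ i, v i * w i| := le_abs_self _
      _ = Real.sqrt ((∑ i, v i * w i) ^ 2) := (Real.sqrt_sq_eq_abs _).symm
      _ ≤ _ := Real.sqrt_le_sqrt h
  rwa [Real.sqrt_mul (Finset.sum_nonneg fun _ _ => sq_nonneg _)] at h2

lemma opNorm2_bddAbove {c : ℕ} (Y : Matrix (Fin c) (Fin c) ℝ) :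
    BddAbove {r : ℝ | ∃ u : Fin c → ℝ, euclNorm u = 1 ∧ euclNorm (Y.mulVec u) = r} := by
  refine ⟨Real.sqrt (∑ i, ∑ j, Y i j ^ 2), ?_⟩
  rintro r ⟨u, hu, rfl⟩
  have hu2 : ∑ j, u j ^ 2 = 1 := by
    have := euclNorm_sq u
    rw [hu] at this
    simpa using this.symm
  have key : ∑ i, (Y.mulVec u) i ^ 2 ≤ ∑ i, ∑ j, Y i j ^ 2 := by
    refine Finset.sum_le_sum fun i _ => ?_
    have h := Finset.sum_mul_sq_le_sq_mul_sq Finset.univ (fun j => Y i j) u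
    calc (Y.mulVec u) i ^ 2 = (∑ j, Y i j * u j) ^ 2 := rfl
      _ ≤ (∑ j, Y i j ^ 2) * ∑ j, u j ^ 2 := h
      _ = ∑ j, Y i j ^ 2 := by rw [hu2, mul_one]
  exact Real.sqrt_le_sqrt key

lemma mulVec_euclNorm_le {c : ℕ} (Y : Matrix (Fin c) (Fin c) ℝ) (v : Fin c → ℝ) :
    euclNorm (Y.mulVec v) ≤ opNorm2 Y * euclNorm v := by
  by_cases hv : v = 0
  · subst hv
    simp [Matrix.mulVec_zero, euclNorm_zero]
  · have ha : 0 < euclNorm v := euclNorm_pos hv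
    set u : Fin c → ℝ := (euclNorm v)⁻¹ • v with hu
    have hu1 : euclNorm u = 1 := by
      rw [hu, euclNorm_smul, abs_of_pos (inv_pos.mpr ha), inv_mul_cancel₀ ha.ne']
    have hle : euclNorm (Y.mulVec u) ≤ opNorm2 Y :=
      le_csSup (opNorm2_bddAbove Y) ⟨u, hu1, rfl⟩
    have hvu : v = euclNorm v • u := by
      rw [hu, smul_smul, mul_inv_cancel₀ ha.ne', one_smul]
    calc euclNorm (Y.mulVec v) = euclNorm v * euclNorm (Y.mulVec u) := by
          have hYv : Y.mulVec v = euclNorm v • Y.mulVec u := by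
            conv_lhs => rw [hvu, Matrix.mulVec_smul]
          rw [hYv, euclNorm_smul, abs_of_pos ha]
      _ ≤ euclNorm v * opNorm2 Y := by
          exact mul_le_mul_of_nonneg_left hle ha.le
      _ = opNorm2 Y * euclNorm v := mul_comm _ _

lemma opNorm2_nonneg {c : ℕ} (Y : Matrix (Fin c) (Fin c) ℝ) : 0 ≤ opNorm2 Y := by
  rcases Nat.eq_zero_or_pos c with hc | hc
  · subst hc
    have hset : {r : ℝ | ∃ u : Fin 0 → ℝ, euclNorm u = 1 ∧ euclNorm (Y.mulVec u) = r} = ∅ := by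
      ext r
      simp only [Set.mem_setOf_eq, Set.mem_empty_iff_false, iff_false, not_exists]
      intro u h
      have : euclNorm u = 0 := by simp [euclNorm]
      simp [this] at h
    unfold opNorm2
    rw [hset, Real.sSup_empty]
  · have i0 : Fin c := ⟨0, hc⟩
    set v : Fin c → ℝ := Pi.single i0 1 with hvdef
    have hv : v ≠ 0 := by
      intro h
      have := congrFun h i0
      simp [hvdef] at this
    have h := mulVec_euclNorm_le Y v
    nlinarith [euclNorm_nonneg (Y.mulVec v), euclNorm_pos hv]

lemma transpose_mulVec_euclNorm_le {c : ℕ} (Y : Matrix (Fin c) (Fin c) ℝ) (u : Fin c → ℝ) :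
    euclNorm (Yᵀ.mulVec u) ≤ opNorm2 Y * euclNorm u := by
  set w := Yᵀ.mulVec u with hw
  have h1 : euclNorm w ^ 2 = u ⬝ᵥ (Y.mulVec w) := by
    rw [euclNorm_sq]
    have hdp : w ⬝ᵥ w = u ⬝ᵥ (Y.mulVec w) := by
      have h2 : u ⬝ᵥ (Y.mulVec w) = (u ᵥ* Y) ⬝ᵥ w := Matrix.dotProduct_mulVec u Y w
      rw [h2, ← Matrix.mulVec_transpose, ← hw]
    rw [← hdp]
    simp [dotProduct, sq]
  have hkey : euclNorm w ^ 2 ≤ euclNorm u * (opNorm2 Y * euclNorm w) := by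
    calc euclNorm w ^ 2 = u ⬝ᵥ (Y.mulVec w) := h1
      _ ≤ euclNorm u * euclNorm (Y.mulVec w) := dotProduct_le _ _
      _ ≤ euclNorm u * (opNorm2 Y * euclNorm w) :=
          mul_le_mul_of_nonneg_left (mulVec_euclNorm_le Y w) (euclNorm_nonneg u)
  rcases (euclNorm_nonneg w).lt_or_eq with h0 | h0
  · nlinarith [euclNorm_nonneg u, opNorm2_nonneg Y]
  · rw [← h0]
    exact mul_nonneg (opNorm2_nonneg Y) (euclNorm_nonneg u)

lemma psd_trace_nonneg {m : ℕ} {A : Matrix (Fin m) (Fin m) ℝ} (h : A.PosSemidef) :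
    0 ≤ A.trace := by
  rw [Matrix.trace]
  refine Finset.sum_nonneg fun i _ => ?_
  exact h.diag_nonneg

lemma trace_mul_transpose_self {c : ℕ} (W : Matrix (Fin c) (Fin c) ℝ) :
    (W * Wᵀ).trace = ∑ i, ∑ j, W j i ^ 2 := by
  rw [Matrix.trace]
  simp only [Matrix.diag, Matrix.mul_apply, Matrix.transpose_apply, sq]
  exact Finset.sum_comm

end DirichletAux

open DirichletAux

/-- Dirichlet-energy decay for a graph-convolution layer `M ↦ P M Y`:
`tr((PMY)ᵀ Δ̃ (PMY)) ≤ (1−λ)² ‖Y‖₂² tr(Mᵀ Δ̃ M)`. -/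
theorem dirichlet_energy_decay_layer {n c : ℕ}
    (Δ : Matrix (Fin n) (Fin n) ℝ) (hΔ : Δ.IsSymm)
    (lam : ℝ) (hlam0 : 0 < lam) (hlam1 : lam ≤ 1)
    (heig : ∀ μ : ℝ, (∃ v : Fin n → ℝ, v ≠ 0 ∧ Δ.mulVec v = μ • v) →
      μ = 0 ∨ (lam ≤ μ ∧ μ ≤ 2 - lam))
    (P : Matrix (Fin n) (Fin n) ℝ) (hP : P = 1 - Δ)
    (M : Matrix (Fin n) (Fin c) ℝ) (Y : Matrix (Fin c) (Fin c) ℝ) :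
    ((P * M * Y)ᵀ * Δ * (P * M * Y)).trace
      ≤ (1 - lam) ^ 2 * opNorm2 Y ^ 2 * (Mᵀ * Δ * M).trace := by
  classical
  have hH : Δ.IsHermitian := by
    rw [Matrix.IsHermitian, Matrix.conjTranspose_eq_transpose_of_trivial]
    exact hΔ
  set μ : Fin n → ℝ := hH.eigenvalues with hμdef
  have hμ : ∀ i, μ i = 0 ∨ (lam ≤ μ i ∧ μ i ≤ 2 - lam) := by
    intro i
    refine heig _ ⟨hH.eigenvectorBasis i, ?_, hH.mulVec_eigenvectorBasis i⟩
    intro h0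
    apply hH.eigenvectorBasis.orthonormal.ne_zero i
    ext j
    exact congrFun h0 j
  have hμ0 : ∀ i, 0 ≤ μ i := by
    intro i
    rcases hμ i with h | h
    · simp [h]
    · linarith [h.1]
  have hΔpsd : Δ.PosSemidef := hH.posSemidef_iff_eigenvalues_nonneg.mpr (fun i => hμ0 i)
  -- spectral decomposition
  set U : Matrix (Fin n) (Fin n) ℝ := (hH.eigenvectorUnitary : Matrix (Fin n) (Fin n) ℝ)
    with hUdef
  have hUU : U * star U = 1 := Matrix.mem_unitaryGroup_iff.mp hH.eigenvectorUnitary.2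
  have hUU' : star U * U = 1 := Matrix.mem_unitaryGroup_iff'.mp hH.eigenvectorUnitary.2
  have hspec : Δ = U * Matrix.diagonal μ * star U := by
    have := hH.spectral_theorem
    rw [RCLike.ofReal_real_eq_id] at this
    simpa using this
  have key : ∀ A B : Matrix (Fin n) (Fin n) ℝ,
      (U * A * star U) * (U * B * star U) = U * (A * B) * star U := by
    intro A B
    calc (U * A * star U) * (U * B * star U)
        = U * (A * ((star U * U) * (B * star U))) := by
          simp only [Matrix.mul_assoc]
      _ = U * (A * B) * star U := by
          rw [hUU', Matrix.one_mul]
          simp only [Matrix.mul_assoc]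
  -- P in spectral form
  have hPspec : P = U * Matrix.diagonal (fun i => 1 - μ i) * star U := by
    rw [hP, hspec]
    calc (1 : Matrix (Fin n) (Fin n) ℝ) - U * Matrix.diagonal μ * star U
        = U * Matrix.diagonal (fun _ => (1 : ℝ)) * star U - U * Matrix.diagonal μ * star U := by
          rw [Matrix.diagonal_one, Matrix.mul_one, hUU]
      _ = U * (Matrix.diagonal (fun _ => (1 : ℝ)) - Matrix.diagonal μ) * star U := by
          rw [Matrix.mul_sub, Matrix.sub_mul]
      _ = U * Matrix.diagonal (fun i => 1 - μ i) * star U := by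
          rw [Matrix.diagonal_sub]
  have hPDP : P * Δ * P
      = U * Matrix.diagonal (fun i => μ i * (1 - μ i) ^ 2) * star U := by
    rw [hPspec, hspec, key, key, Matrix.diagonal_mul_diagonal, Matrix.diagonal_mul_diagonal]
    congr 1
    congr 1
    ext i j
    by_cases h : i = j
    · subst h
      simp only [Matrix.diagonal_apply_eq]
      ring
    · simp [Matrix.diagonal_apply_ne _ h]
  -- the PSD difference matrix
  set d : Fin n → ℝ := fun i => (1 - lam) ^ 2 * μ i - μ i * (1 - μ i) ^ 2 with hddef
  have hd0 : ∀ i, 0 ≤ d i := by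
    intro i
    rcases hμ i with h | ⟨h1, h2⟩
    · simp [hddef, h]
    · have hprod : 0 ≤ μ i * ((μ i - lam) * ((2 - lam) - μ i)) :=
        mul_nonneg (hμ0 i) (mul_nonneg (by linarith) (by linarith))
      simp only [hddef]
      nlinarith [hprod]
  set C : Matrix (Fin n) (Fin n) ℝ := (1 - lam) ^ 2 • Δ - P * Δ * P with hCdef
  have hCeq : C = U * Matrix.diagonal d * star U := by
    rw [hCdef, hPDP, hspec]
    calc (1 - lam) ^ 2 • (U * Matrix.diagonal μ * star U)
          - U * Matrix.diagonal (fun i => μ i * (1 - μ i) ^ 2) * star U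
        = U * ((1 - lam) ^ 2 • Matrix.diagonal μ) * star U
          - U * Matrix.diagonal (fun i => μ i * (1 - μ i) ^ 2) * star U := by
          rw [← Matrix.smul_mul, ← Matrix.mul_smul]
      _ = U * ((1 - lam) ^ 2 • Matrix.diagonal μ
            - Matrix.diagonal (fun i => μ i * (1 - μ i) ^ 2)) * star U := by
          rw [Matrix.mul_sub, Matrix.sub_mul]
      _ = U * Matrix.diagonal d * star U := by
          rw [← Matrix.diagonal_smul, Matrix.diagonal_sub]
          have hfun : (fun i => ((1 - lam) ^ 2 • μ) i - μ i * (1 - μ i) ^ 2) = d := by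
            funext i
            simp only [Pi.smul_apply, smul_eq_mul, hddef]
          rw [hfun]
  have hCpsd : C.PosSemidef := by
    rw [hCeq, Matrix.star_eq_conjTranspose]
    exact (Matrix.posSemidef_diagonal_iff.mpr hd0).mul_mul_conjTranspose_same U
  -- step 1 : tr((MY)ᵀ (PΔP) (MY)) ≤ (1-lam)² tr((MY)ᵀ Δ (MY))
  set Z : Matrix (Fin n) (Fin c) ℝ := M * Y with hZdef
  have hZpsd : (Zᴴ * C * Z).PosSemidef := hCpsd.conjTranspose_mul_mul_same Z
  have htr0 : 0 ≤ (Zᴴ * C * Z).trace := psd_trace_nonneg hZpsd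
  have hsplit : (Zᴴ * C * Z).trace
      = (1 - lam) ^ 2 * (Zᵀ * Δ * Z).trace - (Zᵀ * (P * Δ * P) * Z).trace := by
    rw [Matrix.conjTranspose_eq_transpose_of_trivial, hCdef]
    rw [Matrix.mul_sub, Matrix.sub_mul, Matrix.trace_sub]
    rw [Matrix.mul_smul, Matrix.smul_mul, Matrix.trace_smul]
    simp [smul_eq_mul]
  have step1 : (Zᵀ * (P * Δ * P) * Z).trace ≤ (1 - lam) ^ 2 * (Zᵀ * Δ * Z).trace := by
    rw [hsplit] at htr0
    linarith
  -- rewrite the original LHS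
  have hLHS : (P * M * Y)ᵀ * Δ * (P * M * Y) = Zᵀ * (P * Δ * P) * Z := by
    have hPsymm : Pᵀ = P := by
      rw [hP, Matrix.transpose_sub, Matrix.transpose_one, hΔ.eq]
    rw [hZdef]
    simp only [Matrix.transpose_mul, hPsymm, Matrix.mul_assoc]
  -- step 2 : tr(Zᵀ Δ Z) = tr(Yᵀ N Y) ≤ s² tr(N)
  set N : Matrix (Fin c) (Fin c) ℝ := Mᵀ * Δ * M with hNdef
  have hN : N.PosSemidef := by
    have := hΔpsd.conjTranspose_mul_mul_same M
    rwa [Matrix.conjTranspose_eq_transpose_of_trivial] at this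
  obtain ⟨K, hK⟩ : ∃ K : Matrix (Fin c) (Fin c) ℝ, N = Kᴴ * K := by
    set V : Matrix (Fin c) (Fin c) ℝ := (hN.1.eigenvectorUnitary : Matrix (Fin c) (Fin c) ℝ)
      with hVdef
    have hs : N = V * Matrix.diagonal hN.1.eigenvalues * star V := by
      have := hN.1.spectral_theorem
      rw [RCLike.ofReal_real_eq_id] at this
      simpa using this
    refine ⟨Matrix.diagonal (fun i => Real.sqrt (hN.1.eigenvalues i)) * star V, hs.trans ?_⟩
    rw [Matrix.conjTranspose_mul, Matrix.diagonal_conjTranspose, Matrix.star_eq_conjTranspose,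
      Matrix.conjTranspose_conjTranspose]
    simp only [Matrix.mul_assoc, ← Matrix.mul_assoc (Matrix.diagonal _) (Matrix.diagonal _),
      Matrix.diagonal_mul_diagonal]
    refine congrArg (fun D => V * (Matrix.diagonal D * Vᴴ)) (funext fun i => ?_)
    exact (Real.mul_self_sqrt (hN.eigenvalues_nonneg i)).symm
  have hZN : Zᵀ * Δ * Z = Yᵀ * N * Y := by
    rw [hZdef, hNdef]
    simp only [Matrix.transpose_mul, Matrix.mul_assoc]
  have hWform : Yᵀ * N * Y = (Yᵀ * Kᵀ) * (Yᵀ * Kᵀ)ᵀ := by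
    rw [hK, Matrix.conjTranspose_eq_transpose_of_trivial]
    simp only [Matrix.transpose_mul, Matrix.transpose_transpose, Matrix.mul_assoc]
  have hWentry : ∀ i j, (Yᵀ * Kᵀ) j i = (Yᵀ.mulVec (fun a => K i a)) j := by
    intro i j
    simp [Matrix.mul_apply, Matrix.mulVec, dotProduct]
  have htrN : N.trace = ∑ i, ∑ j, K i j ^ 2 := by
    rw [hK, Matrix.conjTranspose_eq_transpose_of_trivial, Matrix.trace]
    simp only [Matrix.diag, Matrix.mul_apply, Matrix.transpose_apply, sq]
    exact Finset.sum_comm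
  have step2 : (Yᵀ * N * Y).trace ≤ opNorm2 Y ^ 2 * N.trace := by
    rw [hWform, trace_mul_transpose_self, htrN, Finset.mul_sum]
    refine Finset.sum_le_sum fun i _ => ?_
    have hrow : ∑ j, (Yᵀ * Kᵀ) j i ^ 2 = euclNorm (Yᵀ.mulVec (fun a => K i a)) ^ 2 := by
      rw [euclNorm_sq]
      exact Finset.sum_congr rfl fun j _ => by rw [hWentry i j]
    rw [hrow]
    have hb := transpose_mulVec_euclNorm_le Y (fun a => K i a)
    have hKnorm : euclNorm (fun a => K i a) ^ 2 = ∑ j, K i j ^ 2 := euclNorm_sq _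
    calc euclNorm (Yᵀ.mulVec (fun a => K i a)) ^ 2
        ≤ (opNorm2 Y * euclNorm (fun a => K i a)) ^ 2 :=
          pow_le_pow_left₀ (euclNorm_nonneg _) hb 2
      _ = opNorm2 Y ^ 2 * ∑ j, K i j ^ 2 := by rw [mul_pow, hKnorm]
  -- conclusion
  have htrNnn : 0 ≤ (Yᵀ * N * Y).trace := by
    have : (Yᵀ * N * Y).PosSemidef := by
      have := hN.conjTranspose_mul_mul_same Y
      rwa [Matrix.conjTranspose_eq_transpose_of_trivial] at this
    exact psd_trace_nonneg this
  calc ((P * M * Y)ᵀ * Δ * (P * M * Y)).trace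
      = (Zᵀ * (P * Δ * P) * Z).trace := by rw [hLHS]
    _ ≤ (1 - lam) ^ 2 * (Zᵀ * Δ * Z).trace := step1
    _ = (1 - lam) ^ 2 * (Yᵀ * N * Y).trace := by rw [hZN]
    _ ≤ (1 - lam) ^ 2 * (opNorm2 Y ^ 2 * N.trace) :=
        mul_le_mul_of_nonneg_left step2 (sq_nonneg _)
    _ = (1 - lam) ^ 2 * opNorm2 Y ^ 2 * (Mᵀ * Δ * M).trace := by
        rw [hNdef, mul_assoc]
end

section
/- Let Δ̃ be a real symmetric n×n matrix and let 0 < λ ≤ 1 be such that every eigenvalue μ of Δ̃ satisfies either μ = 0 or λ ≤ μ ≤ 2 − λ, and set P = I − Δ̃. Let c ≥ 1, and for each layer ℓ = 1,…,L let β_ℓ ∈ [0,1] and let W_ℓ be a c×c weight matrix (nonnegative entries, each row summing to 1); set Y_ℓ = (1−β_ℓ)I + β_ℓ W_ℓ. Define M_0 ∈ ℝ^{n×c} arbitrarily and M_ℓ = P M_{ℓ−1} Y_ℓ. Then tr(M_Lᵀ Δ̃ M_L) ≤ (c(1−λ)²)^L · tr(M_0ᵀ Δ̃ M_0). In particular,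 if (1−λ) < 1/√c, the Dirichlet energy tr(M_Lᵀ Δ̃ M_L) decays to 0 exponentially in the number of layers L. -/
open Matrix Filter

private lemma mulVec_sum_smul {n : ℕ} (Δ : Matrix (Fin n) (Fin n) ℝ) (d : Fin n → ℝ)
    (u : Fin n → (Fin n → ℝ)) :
    Δ.mulVec (∑ i, d i • u i) = ∑ i, d i • Δ.mulVec (u i) := by
  have := map_sum (Matrix.mulVecLin Δ) (fun i => d i • u i) Finset.univ
  simp only [Matrix.mulVecLin_apply, _root_.map_smul] at this
  simpa [Matrix.mulVec_smul] using this

private lemma dotProduct_sum_smul {n : ℕ} (v : Fin n → ℝ) (d : Fin n → ℝ)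
    (u : Fin n → (Fin n → ℝ)) :
    v ⬝ᵥ (∑ i, d i • u i) = ∑ i, d i * (v ⬝ᵥ u i) := by
  simp only [dotProduct, Finset.sum_apply, Pi.smul_apply, smul_eq_mul, Finset.mul_sum]
  rw [Finset.sum_comm]
  exact Finset.sum_congr rfl fun i _ => Finset.sum_congr rfl fun x _ => by ring

private lemma quad_expand {n : ℕ} (Δ : Matrix (Fin n) (Fin n) ℝ)
    (u : Fin n → (Fin n → ℝ)) (μ : Fin n → ℝ)
    (heigvec : ∀ i, Δ.mulVec (u i) = μ i • u i)
    (horth : ∀ i j, u i ⬝ᵥ u j = if i = j then (1:ℝ) else 0)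
    (d : Fin n → ℝ) :
    (∑ i, d i • u i) ⬝ᵥ Δ.mulVec (∑ i, d i • u i) = ∑ i, μ i * d i ^ 2 := by
  rw [mulVec_sum_smul]
  have h1 : ∀ i, d i • Δ.mulVec (u i) = (d i * μ i) • u i := by
    intro i; rw [heigvec i, smul_smul]
  simp only [h1]
  rw [dotProduct_sum_smul]
  refine Finset.sum_congr rfl fun i _ => ?_
  have : (∑ j, d j • u j) ⬝ᵥ u i = d i := by
    rw [show (∑ j, d j • u j) ⬝ᵥ u i = u i ⬝ᵥ (∑ j, d j • u j) from dotProduct_comm _ _,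
      dotProduct_sum_smul]
    simp [horth, Finset.sum_ite_eq, eq_comm]
  rw [this]; ring

/-- Spectral bounds for the quadratic form of `Δ`. -/
private lemma spectral_bounds {n : ℕ} (Δ : Matrix (Fin n) (Fin n) ℝ) (hΔ : Δ.IsSymm)
    (lam : ℝ) (hlam0 : 0 < lam) (hlam1 : lam ≤ 1)
    (heig : ∀ μ : ℝ, (∃ v : Fin n → ℝ, v ≠ 0 ∧ Δ.mulVec v = μ • v) →
      μ = 0 ∨ (lam ≤ μ ∧ μ ≤ 2 - lam))
    (v : Fin n → ℝ) :
    0 ≤ v ⬝ᵥ Δ.mulVec v ∧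
      ((1 - Δ).mulVec v) ⬝ᵥ Δ.mulVec ((1 - Δ).mulVec v)
        ≤ (1 - lam) ^ 2 * (v ⬝ᵥ Δ.mulVec v) := by
  have hH : Δ.IsHermitian := by
    show Δᴴ = Δ
    rw [Matrix.conjTranspose_eq_transpose_of_trivial]
    exact hΔ
  set b := hH.eigenvectorBasis with hb
  set μ := hH.eigenvalues with hμdef
  set u : Fin n → (Fin n → ℝ) := fun i => ⇑(b i) with hu
  have heigvec : ∀ i, Δ.mulVec (u i) = μ i • u i := fun i => hH.mulVec_eigenvectorBasis i
  have horth : ∀ i j, u i ⬝ᵥ u j = if i = j then (1:ℝ) else 0 := by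
    intro i j
    have := orthonormal_iff_ite.mp b.orthonormal i j
    simpa [PiLp.inner_apply, RCLike.inner_apply, dotProduct, mul_comm] using this
  have hu0 : ∀ i, u i ≠ 0 := by
    intro i h
    have := horth i i
    rw [h] at this
    simp at this
  have hμprop : ∀ i, μ i = 0 ∨ (lam ≤ μ i ∧ μ i ≤ 2 - lam) :=
    fun i => heig (μ i) ⟨u i, hu0 i, heigvec i⟩
  have hμ0 : ∀ i, 0 ≤ μ i := by
    intro i
    rcases hμprop i with h | h
    · rw [h]
    · linarith [h.1]
  -- expansion of v in the eigenbasis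
  set d : Fin n → ℝ := fun i => u i ⬝ᵥ v with hd
  have hv : v = ∑ i, d i • u i := by
    have hsum := b.sum_repr ((WithLp.equiv 2 (Fin n → ℝ)).symm v)
    have hrepr : ∀ i, b.repr ((WithLp.equiv 2 (Fin n → ℝ)).symm v) i = d i := by
      intro i
      rw [OrthonormalBasis.repr_apply_apply]
      simp [PiLp.inner_apply, RCLike.inner_apply, dotProduct, hd, hu]
      exact Finset.sum_congr rfl fun x _ => mul_comm _ _
    funext k
    have := congrFun (congrArg (fun x : EuclideanSpace ℝ (Fin n) => (x : Fin n → ℝ)) hsum) k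
    change _ = v k at this
    rw [← this]
    have : ∀ (s : Finset (Fin n)),
        ((∑ i ∈ s, b.repr ((WithLp.equiv 2 (Fin n → ℝ)).symm v) i • b i :
          EuclideanSpace ℝ (Fin n)) : Fin n → ℝ) k
        = ∑ i ∈ s, d i * u i k := by
      intro s
      induction s using Finset.induction with
      | empty => simp
      | insert _ _ hx ih =>
        rw [Finset.sum_insert hx, Finset.sum_insert hx, ← ih]
        simp only [PiLp.add_apply, PiLp.smul_apply, smul_eq_mul, hrepr]
        rfl
    rw [this Finset.univ]
    simp [Finset.sum_apply]
  have hqv : v ⬝ᵥ Δ.mulVec v = ∑ i, μ i * d i ^ 2 := by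
    conv_lhs => rw [hv]
    exact quad_expand Δ u μ heigvec horth d
  have hPv : (1 - Δ).mulVec v = ∑ i, ((1 - μ i) * d i) • u i := by
    rw [Matrix.sub_mulVec, Matrix.one_mulVec]
    conv_lhs => rw [hv, mulVec_sum_smul]
    rw [← Finset.sum_sub_distrib]
    refine Finset.sum_congr rfl fun i _ => ?_
    rw [heigvec i, smul_smul, ← sub_smul]
    ring_nf
  have hqPv : ((1 - Δ).mulVec v) ⬝ᵥ Δ.mulVec ((1 - Δ).mulVec v)
      = ∑ i, μ i * ((1 - μ i) * d i) ^ 2 := by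
    rw [hPv]
    exact quad_expand Δ u μ heigvec horth _
  constructor
  · rw [hqv]
    exact Finset.sum_nonneg fun i _ => mul_nonneg (hμ0 i) (sq_nonneg _)
  · rw [hqv, hqPv, Finset.mul_sum]
    refine Finset.sum_le_sum fun i _ => ?_
    rcases hμprop i with h | h
    · simp [h]
    · have h1 : (1 - μ i) ^ 2 ≤ (1 - lam) ^ 2 :=
        sq_le_sq' (by linarith [h.2]) (by linarith [h.1])
      nlinarith [mul_nonneg (mul_nonneg (hμ0 i) (sq_nonneg (d i))) (sub_nonneg.mpr h1),
        sq_nonneg (d i)]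

/-- Over-smoothing in deep graph convolutional networks without initial residual input:
along the recursion `M_ℓ = P M_{ℓ−1} Y_ℓ` with `Y_ℓ = (1−β_ℓ)I + β_ℓ W_ℓ` for weight
matrices `W_ℓ`, the Dirichlet energy satisfies
`tr(M_Lᵀ Δ̃ M_L) ≤ (c(1−λ)²)^L tr(M_0ᵀ Δ̃ M_0)`; in particular, if `1−λ < 1/√c`, the
Dirichlet energy decays to `0` exponentially in the number of layers. -/
theorem dirichlet_energy_exponential_decay {n c : ℕ} (hc : 1 ≤ c)
    (Δ : Matrix (Fin n) (Fin n) ℝ) (hΔ : Δ.IsSymm)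
    (lam : ℝ) (hlam0 : 0 < lam) (hlam1 : lam ≤ 1)
    (heig : ∀ μ : ℝ, (∃ v : Fin n → ℝ, v ≠ 0 ∧ Δ.mulVec v = μ • v) →
      μ = 0 ∨ (lam ≤ μ ∧ μ ≤ 2 - lam))
    (P : Matrix (Fin n) (Fin n) ℝ) (hP : P = 1 - Δ)
    (β : ℕ → ℝ) (hβ0 : ∀ ℓ, 0 ≤ β ℓ) (hβ1 : ∀ ℓ, β ℓ ≤ 1)
    (W : ℕ → Matrix (Fin c) (Fin c) ℝ)
    (hW_nonneg : ∀ ℓ i j, 0 ≤ W ℓ i j) (hW_row : ∀ ℓ i, ∑ j, W ℓ i j = 1)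
    (Y : ℕ → Matrix (Fin c) (Fin c) ℝ)
    (hY : ∀ ℓ, Y ℓ = (1 - β ℓ) • (1 : Matrix (Fin c) (Fin c) ℝ) + β ℓ • W ℓ)
    (M : ℕ → Matrix (Fin n) (Fin c) ℝ)
    (hrec : ∀ ℓ : ℕ, M (ℓ + 1) = P * M ℓ * Y (ℓ + 1)) :
    (∀ L : ℕ, ((M L)ᵀ * Δ * M L).trace
        ≤ ((c : ℝ) * (1 - lam) ^ 2) ^ L * ((M 0)ᵀ * Δ * M 0).trace)
    ∧ ((1 - lam) < 1 / Real.sqrt c →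
        Tendsto (fun L : ℕ => ((M L)ᵀ * Δ * M L).trace) atTop (nhds 0)) := by
  -- quadratic form
  set q : (Fin n → ℝ) → ℝ := fun v => v ⬝ᵥ Δ.mulVec v with hq
  have hspec := spectral_bounds Δ hΔ lam hlam0 hlam1 heig
  have hq0 : ∀ v, 0 ≤ q v := fun v => (hspec v).1
  have hqP : ∀ v, q (P.mulVec v) ≤ (1 - lam) ^ 2 * q v := by
    intro v; rw [hP]; exact (hspec v).2
  -- entries of NᵀΔN
  have hA : ∀ (N : Matrix (Fin n) (Fin c) ℝ) (j k : Fin c),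
      (Nᵀ * Δ * N) j k = (fun i => N i j) ⬝ᵥ Δ.mulVec (fun i => N i k) := by
    intro N j k
    simp only [Matrix.mul_apply, Matrix.transpose_apply, dotProduct, Matrix.mulVec,
      Finset.sum_mul, Finset.mul_sum]
    rw [Finset.sum_comm]
    exact Finset.sum_congr rfl fun i _ => Finset.sum_congr rfl fun i' _ => by ring
  have htr : ∀ (N : Matrix (Fin n) (Fin c) ℝ),
      (Nᵀ * Δ * N).trace = ∑ j, q (fun i => N i j) := by
    intro N
    rw [Matrix.trace]
    exact Finset.sum_congr rfl fun j _ => hA N j j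
  -- symmetric bilinear form bound
  have hBsymm : ∀ v w : Fin n → ℝ, v ⬝ᵥ Δ.mulVec w = w ⬝ᵥ Δ.mulVec v := by
    intro v w
    simp only [dotProduct, Matrix.mulVec, Finset.mul_sum]
    rw [Finset.sum_comm]
    refine Finset.sum_congr rfl fun i _ => Finset.sum_congr rfl fun k _ => ?_
    rw [show Δ k i = Δ i k from (congrFun (congrFun hΔ k) i).symm]
    ring
  have hBhalf : ∀ v w : Fin n → ℝ, v ⬝ᵥ Δ.mulVec w ≤ (q v + q w) / 2 := by
    intro v w
    have h := hq0 (v - w)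
    have hexp : q (v - w) = q v - 2 * (v ⬝ᵥ Δ.mulVec w) + q w := by
      simp only [hq, Matrix.mulVec_sub, sub_dotProduct, dotProduct_sub]
      rw [hBsymm w v]
      ring
    rw [hexp] at h
    linarith
  -- energy as nonneg quantity
  have hE0 : ∀ N : Matrix (Fin n) (Fin c) ℝ, 0 ≤ (Nᵀ * Δ * N).trace := by
    intro N
    rw [htr]
    exact Finset.sum_nonneg fun j _ => hq0 _
  -- single step bound
  have hstep : ∀ ℓ : ℕ, ((M (ℓ+1))ᵀ * Δ * M (ℓ+1)).trace
      ≤ (c : ℝ) * (1 - lam) ^ 2 * ((M ℓ)ᵀ * Δ * M ℓ).trace := by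
    intro ℓ
    set Yl := Y (ℓ + 1) with hYl
    -- properties of Yl
    have hy0 : ∀ i j, 0 ≤ Yl i j := by
      intro i j
      rw [hYl, hY]
      simp only [Matrix.add_apply, Matrix.smul_apply, Matrix.one_apply, smul_eq_mul]
      have h1 := hβ0 (ℓ+1); have h2 := hβ1 (ℓ+1); have h3 := hW_nonneg (ℓ+1) i j
      split_ifs <;> nlinarith
    have hyrow : ∀ i, ∑ j, Yl i j = 1 := by
      intro i
      rw [hYl, hY]
      simp only [Matrix.add_apply, Matrix.smul_apply, Matrix.one_apply, smul_eq_mul]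
      rw [Finset.sum_add_distrib, ← Finset.mul_sum, ← Finset.mul_sum, hW_row]
      simp [Finset.sum_ite_eq]
    have hy1 : ∀ i j, Yl i j ≤ 1 := by
      intro i j
      calc Yl i j ≤ ∑ j', Yl i j' :=
            Finset.single_le_sum (fun j' _ => hy0 i j') (Finset.mem_univ j)
        _ = 1 := hyrow i
    set N := P * M ℓ with hN
    set A := Nᵀ * Δ * N with hAdef
    -- reduce to Ylᵀ * A * Yl
    have h1 : (M (ℓ+1))ᵀ * Δ * M (ℓ+1) = Ylᵀ * A * Yl := by
      rw [hrec ℓ, ← hYl, ← hN]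
      simp only [Matrix.transpose_mul, hAdef, Matrix.mul_assoc]
    -- columns of N
    have hcol : ∀ j, (fun i => N i j) = P.mulVec (fun i => M ℓ i j) := by
      intro j
      funext i
      simp [hN, Matrix.mul_apply, Matrix.mulVec, dotProduct]
    -- properties of A
    have hAjj : ∀ j, 0 ≤ A j j := by
      intro j; rw [hAdef, hA]; exact hq0 _
    have hAbound : ∀ j k, A j k ≤ (A j j + A k k) / 2 := by
      intro j k
      rw [hAdef, hA, hA, hA]
      exact hBhalf _ _
    have htrA : A.trace ≤ (1 - lam) ^ 2 * ((M ℓ)ᵀ * Δ * M ℓ).trace := by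
      rw [hAdef, htr, htr, Finset.mul_sum]
      refine Finset.sum_le_sum fun j _ => ?_
      rw [hcol j]
      exact hqP _
    -- trace formula for Ylᵀ * A * Yl
    have htr2 : (Ylᵀ * A * Yl).trace = ∑ m, ∑ k, ∑ j, (Yl j m * Yl k m) * A j k := by
      rw [Matrix.trace]
      refine Finset.sum_congr rfl fun m _ => ?_
      simp only [Matrix.diag_apply, Matrix.mul_apply, Matrix.transpose_apply,
        Finset.sum_mul]
      exact Finset.sum_congr rfl fun k _ => Finset.sum_congr rfl fun j _ => by ring
    have hbd1 : (Ylᵀ * A * Yl).trace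
        ≤ ∑ m, ∑ k, ∑ j, (Yl j m * Yl k m) * ((A j j + A k k) / 2) := by
      rw [htr2]
      refine Finset.sum_le_sum fun m _ => Finset.sum_le_sum fun k _ =>
        Finset.sum_le_sum fun j _ => ?_
      exact mul_le_mul_of_nonneg_left (hAbound j k) (mul_nonneg (hy0 j m) (hy0 k m))
    have hswap : ∑ m, ∑ k, ∑ j, (Yl j m * Yl k m) * ((A j j + A k k) / 2)
        = ∑ k, ∑ j, ((A j j + A k k) / 2) * ∑ m, Yl j m * Yl k m := by
      rw [Finset.sum_comm]
      refine Finset.sum_congr rfl fun k _ => ?_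
      rw [Finset.sum_comm]
      refine Finset.sum_congr rfl fun j _ => ?_
      rw [Finset.mul_sum]
      exact Finset.sum_congr rfl fun m _ => by ring
    have hyy : ∀ j k : Fin c, ∑ m, Yl j m * Yl k m ≤ 1 := by
      intro j k
      calc ∑ m, Yl j m * Yl k m ≤ ∑ m, 1 * Yl k m :=
            Finset.sum_le_sum fun m _ => mul_le_mul_of_nonneg_right (hy1 j m) (hy0 k m)
        _ = ∑ m, Yl k m := Finset.sum_congr rfl fun m _ => one_mul _
        _ = 1 := hyrow k
    have hbd2 : ∑ k, ∑ j, ((A j j + A k k) / 2) * (∑ m, Yl j m * Yl k m)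
        ≤ ∑ k : Fin c, ∑ j : Fin c, (A j j + A k k) / 2 := by
      refine Finset.sum_le_sum fun k _ => Finset.sum_le_sum fun j _ => ?_
      calc ((A j j + A k k) / 2) * (∑ m, Yl j m * Yl k m)
          ≤ ((A j j + A k k) / 2) * 1 := by
            refine mul_le_mul_of_nonneg_left (hyy j k) ?_
            have := hAjj j; have := hAjj k; linarith
        _ = (A j j + A k k) / 2 := mul_one _
    have hfinal : ∑ k : Fin c, ∑ j : Fin c, (A j j + A k k) / 2 = (c : ℝ) * A.trace := by
      calc ∑ k : Fin c, ∑ j : Fin c, (A j j + A k k) / 2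
          = ∑ k : Fin c, ∑ j : Fin c, (A j j / 2 + A k k / 2) :=
            Finset.sum_congr rfl fun k _ => Finset.sum_congr rfl fun j _ => by ring
        _ = ∑ k : Fin c, ((∑ j : Fin c, A j j / 2) + (c : ℝ) * (A k k / 2)) := by
            refine Finset.sum_congr rfl fun k _ => ?_
            rw [Finset.sum_add_distrib, Finset.sum_const, Finset.card_univ,
              Fintype.card_fin, nsmul_eq_mul]
        _ = (c : ℝ) * (∑ j : Fin c, A j j / 2) + (c : ℝ) * ∑ k : Fin c, A k k / 2 := by
            rw [Finset.sum_add_distrib, Finset.sum_const, Finset.card_univ,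
              Fintype.card_fin, nsmul_eq_mul, Finset.mul_sum]
        _ = (c : ℝ) * A.trace := by
            rw [Matrix.trace]
            simp only [Matrix.diag_apply, ← Finset.sum_div]
            ring
    calc ((M (ℓ+1))ᵀ * Δ * M (ℓ+1)).trace = (Ylᵀ * A * Yl).trace := by rw [h1]
      _ ≤ ∑ m, ∑ k, ∑ j, (Yl j m * Yl k m) * ((A j j + A k k) / 2) := hbd1
      _ = ∑ k, ∑ j, ((A j j + A k k) / 2) * ∑ m, Yl j m * Yl k m := hswap
      _ ≤ ∑ k : Fin c, ∑ j : Fin c, (A j j + A k k) / 2 := hbd2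
      _ = (c : ℝ) * A.trace := hfinal
      _ ≤ (c : ℝ) * ((1 - lam) ^ 2 * ((M ℓ)ᵀ * Δ * M ℓ).trace) :=
            mul_le_mul_of_nonneg_left htrA (by positivity)
      _ = (c : ℝ) * (1 - lam) ^ 2 * ((M ℓ)ᵀ * Δ * M ℓ).trace := by ring
  -- the geometric bound
  set r : ℝ := (c : ℝ) * (1 - lam) ^ 2 with hr
  have hr0 : 0 ≤ r := by positivity
  have hmain : ∀ L : ℕ, ((M L)ᵀ * Δ * M L).trace ≤ r ^ L * ((M 0)ᵀ * Δ * M 0).trace := by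
    intro L
    induction L with
    | zero => simp
    | succ L ih =>
      calc ((M (L+1))ᵀ * Δ * M (L+1)).trace ≤ r * ((M L)ᵀ * Δ * M L).trace := hstep L
        _ ≤ r * (r ^ L * ((M 0)ᵀ * Δ * M 0).trace) := mul_le_mul_of_nonneg_left ih hr0
        _ = r ^ (L+1) * ((M 0)ᵀ * Δ * M 0).trace := by ring
  refine ⟨hmain, fun hlt => ?_⟩
  have hcpos : (0 : ℝ) < c := by exact_mod_cast Nat.lt_of_lt_of_le Nat.zero_lt_one hc
  have hr1 : r < 1 := by
    have h1 : (1 - lam) ^ 2 < (1 / Real.sqrt c) ^ 2 :=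
      pow_lt_pow_left₀ hlt (by linarith) (by norm_num)
    have h2 : (1 / Real.sqrt c) ^ 2 = 1 / (c : ℝ) := by
      rw [div_pow, one_pow, Real.sq_sqrt (le_of_lt hcpos)]
    rw [h2] at h1
    have := mul_lt_mul_of_pos_left h1 hcpos
    rw [mul_one_div, div_self (ne_of_gt hcpos)] at this
    exact this
  have hgeo : Tendsto (fun L : ℕ => r ^ L * ((M 0)ᵀ * Δ * M 0).trace) atTop (nhds 0) := by
    have := (tendsto_pow_atTop_nhds_zero_of_lt_one hr0 hr1).mul_const
      (((M 0)ᵀ * Δ * M 0).trace)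
    simpa using this
  exact squeeze_zero (fun L => hE0 (M L)) hmain hgeo
end

section
/- Let A be a real symmetric n×n matrix with nonnegative entries, let Ã = A + I, let d̃_i = Σ_j Ã_{ij} be the i-th row sum of à (so d̃_i ≥ 1 for all i), let D̃ be the diagonal matrix with diagonal entries d̃_i, and let Δ̃ = I − D̃^{−1/2} à D̃^{−1/2}. Then for every x ∈ ℝⁿ one has xᵀ Δ̃ x ≥ 0, and for every x ≠ 0 one has xᵀ Δ̃ x < 2‖x‖₂². Consequently every eigenvalue μ of Δ̃ satisfies 0 ≤ μ < 2. -/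
open Matrix

lemma aux_sum_identity {n : ℕ} (B : Matrix (Fin n) (Fin n) ℝ)
    (hB : ∀ i j, B j i = B i j)
    (d : Fin n → ℝ) (hd : ∀ i, d i = ∑ j, B i j) (y : Fin n → ℝ) (ε : ℝ)
    (hε : ε * ε = 1) :
    ∑ i, d i * y i ^ 2 + ε * ∑ i, ∑ j, B i j * (y i * y j)
      = (1/2) * ∑ i, ∑ j, B i j * (y i + ε * y j) ^ 2 := by
  have h1 : ∑ i, ∑ j, B i j * y i ^ 2 = ∑ i, d i * y i ^ 2 := by
    refine Finset.sum_congr rfl fun i _ => ?_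
    rw [← Finset.sum_mul, ← hd]
  have h2 : ∑ i : Fin n, ∑ j, B i j * y j ^ 2 = ∑ i, d i * y i ^ 2 := by
    rw [Finset.sum_comm]
    refine Finset.sum_congr rfl fun j _ => ?_
    rw [← Finset.sum_mul]
    congr 1
    rw [hd]
    exact Finset.sum_congr rfl fun i _ => hB j i
  have expand : ∀ i j, B i j * (y i + ε * y j) ^ 2
      = B i j * y i ^ 2 + 2 * ε * (B i j * (y i * y j)) + B i j * y j ^ 2 := by
    intro i j
    have : B i j * (y i + ε * y j) ^ 2
        = B i j * y i ^ 2 + 2 * ε * (B i j * (y i * y j)) + (ε * ε) * (B i j * y j ^ 2) := by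
      ring
    rw [this, hε, one_mul]
  simp_rw [expand, Finset.sum_add_distrib, ← Finset.mul_sum, h1, h2]
  ring

/-- The augmented normalized graph Laplacian `Δ̃ = I − D̃^{−1/2} Ã D̃^{−1/2}` (where
`Ã = A + I` and `D̃` is its diagonal row-sum matrix) is positive semidefinite and its
quadratic form is strictly below `2‖x‖₂²` on nonzero vectors; consequently every
eigenvalue `μ` of `Δ̃` satisfies `0 ≤ μ < 2`. -/
theorem augmented_normalized_laplacian_spectrum {n : ℕ}
    (A : Matrix (Fin n) (Fin n) ℝ) (hA : A.IsSymm) (hA_nonneg : ∀ i j, 0 ≤ A i j)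
    (Atil : Matrix (Fin n) (Fin n) ℝ) (hAtil : Atil = A + 1)
    (d : Fin n → ℝ) (hd : ∀ i, d i = ∑ j, Atil i j)
    (Dinvsqrt : Matrix (Fin n) (Fin n) ℝ)
    (hD : Dinvsqrt = Matrix.diagonal (fun i => 1 / Real.sqrt (d i)))
    (Δ : Matrix (Fin n) (Fin n) ℝ)
    (hΔ : Δ = 1 - Dinvsqrt * Atil * Dinvsqrt) :
    (∀ x : Fin n → ℝ, 0 ≤ x ⬝ᵥ Δ.mulVec x)
    ∧ (∀ x : Fin n → ℝ, x ≠ 0 → x ⬝ᵥ Δ.mulVec x < 2 * euclNorm x ^ 2)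
    ∧ (∀ μ : ℝ, (∃ v : Fin n → ℝ, v ≠ 0 ∧ Δ.mulVec v = μ • v) → 0 ≤ μ ∧ μ < 2) := by
  -- basic facts
  have hAt_apply : ∀ i j, Atil i j = A i j + (if i = j then 1 else 0) := by
    intro i j; rw [hAtil]; simp [Matrix.one_apply]
  have hAt_symm : ∀ i j, Atil j i = Atil i j := by
    intro i j
    rw [hAt_apply, hAt_apply, ← hA.apply i j]
    simp [eq_comm]
  have hAt_nonneg : ∀ i j, 0 ≤ Atil i j := by
    intro i j; rw [hAt_apply]
    have := hA_nonneg i j; positivity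
  have hAt_diag : ∀ i, 1 ≤ Atil i i := by
    intro i; rw [hAt_apply]; simp; linarith [hA_nonneg i i]
  have hd1 : ∀ i, 1 ≤ d i := by
    intro i
    rw [hd]
    calc (1 : ℝ) ≤ Atil i i := hAt_diag i
    _ ≤ ∑ j, Atil i j := Finset.single_le_sum (fun j _ => hAt_nonneg i j) (Finset.mem_univ i)
  have hd_pos : ∀ i, 0 < d i := fun i => lt_of_lt_of_le one_pos (hd1 i)
  set c : Fin n → ℝ := fun i => 1 / Real.sqrt (d i) with hc
  have hsqrt_pos : ∀ i, 0 < Real.sqrt (d i) := fun i => Real.sqrt_pos.mpr (hd_pos i)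
  have hc_pos : ∀ i, 0 < c i := fun i => by
    simp only [hc]; exact div_pos one_pos (hsqrt_pos i)
  have hΔ_apply : ∀ i j, Δ i j = (if i = j then 1 else 0) - c i * Atil i j * c j := by
    intro i j
    rw [hΔ, hD]
    simp [Matrix.sub_apply, Matrix.one_apply, Matrix.mul_diagonal, Matrix.diagonal_mul, hc]
  -- quadratic form formula
  have hx2 : ∀ x : Fin n → ℝ, ∀ i, x i ^ 2 = d i * (c i * x i) ^ 2 := by
    intro x i
    have h1 : Real.sqrt (d i) ^ 2 = d i := Real.sq_sqrt (hd_pos i).le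
    have h2 : Real.sqrt (d i) ≠ 0 := (hsqrt_pos i).ne'
    field_simp [hc]
    have hc2 : d i * c i ^ 2 = 1 := by
      show d i * (1 / Real.sqrt (d i)) ^ 2 = 1
      rw [div_pow, h1, one_pow]
      exact mul_one_div_cancel (hd_pos i).ne'
    linear_combination (-(x i ^ 2)) * hc2
  have hquad : ∀ x : Fin n → ℝ, x ⬝ᵥ Δ.mulVec x
      = ∑ i, d i * (c i * x i) ^ 2 - ∑ i, ∑ j, Atil i j * ((c i * x i) * (c j * x j)) := by
    intro x
    simp only [dotProduct, Matrix.mulVec, hΔ_apply]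
    rw [← Finset.sum_sub_distrib]
    refine Finset.sum_congr rfl fun i _ => ?_
    rw [← hx2 x i, Finset.mul_sum]
    have hterm : ∀ j, x i * (((if i = j then 1 else 0) - c i * Atil i j * c j) * x j)
        = (if i = j then x i * x j else 0) - Atil i j * ((c i * x i) * (c j * x j)) := by
      intro j; by_cases h : i = j <;> simp [h] <;> ring
    simp_rw [hterm]
    rw [Finset.sum_sub_distrib, Finset.sum_ite_eq]
    simp [sq]
  -- the two sum-of-squares identities
  have hQ1 : ∀ x : Fin n → ℝ, x ⬝ᵥ Δ.mulVec x
      = (1/2) * ∑ i, ∑ j, Atil i j * ((c i * x i) + (-1) * (c j * x j)) ^ 2 := by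
    intro x
    rw [hquad x, ← aux_sum_identity Atil hAt_symm d hd (fun i => c i * x i) (-1) (by ring)]
    ring
  have hQ2 : ∀ x : Fin n → ℝ, 2 * (∑ i, x i ^ 2) - x ⬝ᵥ Δ.mulVec x
      = (1/2) * ∑ i, ∑ j, Atil i j * ((c i * x i) + 1 * (c j * x j)) ^ 2 := by
    intro x
    rw [hquad x, ← aux_sum_identity Atil hAt_symm d hd (fun i => c i * x i) 1 (by ring)]
    have : ∑ i, x i ^ 2 = ∑ i, d i * (c i * x i) ^ 2 :=
      Finset.sum_congr rfl fun i _ => hx2 x i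
    rw [this]; ring
  have hnorm : ∀ x : Fin n → ℝ, euclNorm x ^ 2 = ∑ i, x i ^ 2 := by
    intro x
    rw [euclNorm, Real.sq_sqrt (Finset.sum_nonneg fun i _ => sq_nonneg _)]
  have part1 : ∀ x : Fin n → ℝ, 0 ≤ x ⬝ᵥ Δ.mulVec x := by
    intro x
    rw [hQ1 x]
    have : (0:ℝ) ≤ ∑ i, ∑ j, Atil i j * ((c i * x i) + (-1) * (c j * x j)) ^ 2 :=
      Finset.sum_nonneg fun i _ => Finset.sum_nonneg fun j _ =>
        mul_nonneg (hAt_nonneg i j) (sq_nonneg _)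
    linarith
  have part2 : ∀ x : Fin n → ℝ, x ≠ 0 → x ⬝ᵥ Δ.mulVec x < 2 * euclNorm x ^ 2 := by
    intro x hx
    obtain ⟨i0, hi0⟩ := Function.ne_iff.mp hx
    have hpos : (0:ℝ) < ∑ i, ∑ j, Atil i j * ((c i * x i) + 1 * (c j * x j)) ^ 2 := by
      refine Finset.sum_pos' (fun i _ => Finset.sum_nonneg fun j _ =>
        mul_nonneg (hAt_nonneg i j) (sq_nonneg _)) ⟨i0, Finset.mem_univ i0, ?_⟩
      refine Finset.sum_pos' (fun j _ => mul_nonneg (hAt_nonneg i0 j) (sq_nonneg _))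
        ⟨i0, Finset.mem_univ i0, ?_⟩
      have hy : c i0 * x i0 ≠ 0 := mul_ne_zero (hc_pos i0).ne' hi0
      have : (0:ℝ) < ((c i0 * x i0) + 1 * (c i0 * x i0)) ^ 2 := by
        have : (c i0 * x i0) + 1 * (c i0 * x i0) = 2 * (c i0 * x i0) := by ring
        rw [this]
        exact (sq_nonneg _).lt_of_ne
          (Ne.symm (pow_ne_zero 2 (mul_ne_zero two_ne_zero hy)))
      nlinarith [hAt_diag i0]
    have h2 := hQ2 x
    rw [hnorm x]
    linarith
  refine ⟨part1, part2, ?_⟩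
  rintro μ ⟨v, hv, hev⟩
  have hS : (0:ℝ) < ∑ i, v i ^ 2 := by
    obtain ⟨i0, hi0⟩ := Function.ne_iff.mp hv
    exact Finset.sum_pos' (fun i _ => sq_nonneg _)
      ⟨i0, Finset.mem_univ i0, (sq_nonneg _).lt_of_ne (Ne.symm (pow_ne_zero 2 hi0))⟩
  have hvd : v ⬝ᵥ Δ.mulVec v = μ * ∑ i, v i ^ 2 := by
    rw [hev]
    simp [dotProduct, Finset.mul_sum, sq]
    refine Finset.sum_congr rfl fun i _ => ?_
    ring
  constructor
  · have h := part1 v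
    rw [hvd] at h
    nlinarith
  · have h := part2 v hv
    rw [hvd, hnorm v] at h
    nlinarith
end

section
/- Let o = (1,0,…,0) ∈ ℝ^{d+1} be the origin of the Lorentz model, let x ∈ ℝ^{d+1} with ⟨x,x⟩_L = −1, x₀ > 0 and x ≠ o, let W be a (d+1)×(d+1) real matrix such that the vector w = W·log_o(x) has 0-th coordinate equal to 0 and w ≠ 0, and let ξ be a nonzero real number. Then ξ ⊙ (W ⊗ x) = (ξW) ⊗ x, where W ⊗ x = exp_o(W·log_o(x)) is the Lorentz matrix-vector multiplication and ξ ⊙ y = exp_o(ξ·log_o(y)) is the Lorentz scalar multiplication. -/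
/-- Lorentz inner product ⟨x,y⟩_L = −x₀y₀ + Σ_{i=1}^{d} x_i y_i on ℝ^{d+1}. -/
def lorentzInner {d : ℕ} (x y : Fin (d + 1) → ℝ) : ℝ :=
  -(x 0 * y 0) + ∑ i : Fin d, x i.succ * y i.succ

/-- Lorentz norm ‖v‖_L = √⟨v,v⟩_L. -/
noncomputable def lorentzNorm {d : ℕ} (v : Fin (d + 1) → ℝ) : ℝ :=
  Real.sqrt (lorentzInner v v)

/-- Exponential map of the Lorentz model at `x`:
`exp_x(v) = cosh(‖v‖_L)·x + sinh(‖v‖_L)·v/‖v‖_L`. -/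
noncomputable def expMap {d : ℕ} (x v : Fin (d + 1) → ℝ) : Fin (d + 1) → ℝ :=
  Real.cosh (lorentzNorm v) • x + (Real.sinh (lorentzNorm v) / lorentzNorm v) • v

/-- Inverse hyperbolic cosine: `arcosh x = log (x + √(x²−1))`. -/
noncomputable def arcosh (x : ℝ) : ℝ :=
  Real.log (x + Real.sqrt (x ^ 2 - 1))

/-- Logarithmic map of the Lorentz model at `x`:
`log_x(y) = (arcosh(−⟨x,y⟩_L)/√(⟨x,y⟩_L²−1))·(y + ⟨x,y⟩_L·x)`. -/
noncomputable def logMap {d : ℕ} (x y : Fin (d + 1) → ℝ) : Fin (d + 1) → ℝ :=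
  (arcosh (-(lorentzInner x y)) / Real.sqrt (lorentzInner x y ^ 2 - 1)) •
    (y + lorentzInner x y • x)

/-- Origin `o = (1,0,…,0)` of the Lorentz model. -/
def lorentzOrigin (d : ℕ) : Fin (d + 1) → ℝ :=
  fun i => if i = 0 then 1 else 0

/-- Lorentz matrix-vector multiplication `W ⊗ x = exp_o(W·log_o(x))`. -/
noncomputable def lorentzMatMul {d : ℕ} (W : Matrix (Fin (d + 1)) (Fin (d + 1)) ℝ)
    (x : Fin (d + 1) → ℝ) : Fin (d + 1) → ℝ :=
  expMap (lorentzOrigin d) (W.mulVec (logMap (lorentzOrigin d) x))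

/-- Lorentz scalar multiplication `ξ ⊙ y = exp_o(ξ·log_o(y))`. -/
noncomputable def lorentzScalarMul {d : ℕ} (ξ : ℝ) (y : Fin (d + 1) → ℝ) :
    Fin (d + 1) → ℝ :=
  expMap (lorentzOrigin d) (ξ • logMap (lorentzOrigin d) y)

lemma logMap_expMap {d : ℕ} (w : Fin (d + 1) → ℝ) (h0 : w 0 = 0) (hw : w ≠ 0) :
    logMap (lorentzOrigin d) (expMap (lorentzOrigin d) w) = w := by
  set o := lorentzOrigin d with ho
  have ho0 : o 0 = 1 := by simp [ho, lorentzOrigin]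
  have hos : ∀ i : Fin d, o i.succ = 0 := fun i => by
    simp [ho, lorentzOrigin, Fin.succ_ne_zero]
  have hSpos : 0 < lorentzInner w w := by
    obtain ⟨j, hj⟩ := Function.ne_iff.mp hw
    simp only [Pi.zero_apply] at hj
    have hj0 : j ≠ 0 := by rintro rfl; exact hj h0
    have hjs : (j.pred hj0).succ = j := Fin.succ_pred j hj0
    rw [lorentzInner, h0]
    simp only [mul_zero, zero_mul, neg_zero, zero_add]
    refine Finset.sum_pos' (fun i _ => mul_self_nonneg _)
      ⟨j.pred hj0, Finset.mem_univ _, ?_⟩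
    rw [hjs]
    exact mul_self_pos.mpr hj
  set r := lorentzNorm w with hr
  have hrpos : 0 < r := Real.sqrt_pos.mpr hSpos
  have hsinh : 0 < Real.sinh r := Real.sinh_pos_iff.mpr hrpos
  set y := expMap o w with hy
  have hy0 : y 0 = Real.cosh r := by
    simp [hy, expMap, ho0, h0, ← hr]
  have hinner : lorentzInner o y = -(Real.cosh r) := by
    simp [lorentzInner, ho0, hy0, hos]
  have hsq : lorentzInner o y ^ 2 - 1 = Real.sinh r ^ 2 := by
    rw [hinner]
    have := Real.cosh_sq r
    ring_nf
    nlinarith [Real.cosh_sq r]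
  have harcosh : arcosh (-(lorentzInner o y)) = r := by
    rw [hinner, neg_neg, arcosh]
    have h1 : Real.cosh r ^ 2 - 1 = Real.sinh r ^ 2 := by nlinarith [Real.cosh_sq r]
    rw [h1, Real.sqrt_sq hsinh.le, Real.cosh_add_sinh, Real.log_exp]
  have hsqrt : Real.sqrt (lorentzInner o y ^ 2 - 1) = Real.sinh r := by
    rw [hsq, Real.sqrt_sq hsinh.le]
  have hyo : y + lorentzInner o y • o = (Real.sinh r / r) • w := by
    rw [hinner, hy, expMap, ← hr]
    module
  rw [logMap, harcosh, hsqrt, hyo, smul_smul]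
  rw [div_mul_div_comm, mul_comm, div_self (by positivity), one_smul]

/-- HyperDrop reparameterization: multiplying the output of a Lorentz linear layer by a
nonzero scalar `ξ` equals a Lorentz linear layer with rescaled weights:
`ξ ⊙ (W ⊗ x) = (ξW) ⊗ x`. -/
theorem lorentzScalarMul_lorentzMatMul {d : ℕ}
    (x : Fin (d + 1) → ℝ) (hx : lorentzInner x x = -1) (hx0 : 0 < x 0)
    (hxo : x ≠ lorentzOrigin d)
    (W : Matrix (Fin (d + 1)) (Fin (d + 1)) ℝ)
    (hw0 : W.mulVec (logMap (lorentzOrigin d) x) 0 = 0)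
    (hw : W.mulVec (logMap (lorentzOrigin d) x) ≠ 0)
    (ξ : ℝ) (hξ : ξ ≠ 0) :
    lorentzScalarMul ξ (lorentzMatMul W x) = lorentzMatMul (ξ • W) x := by
  unfold lorentzScalarMul lorentzMatMul
  rw [logMap_expMap _ hw0 hw, Matrix.smul_mulVec]
end
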